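/- arXiv:2312.16478 — 3 statements merged into one kernel-verified Lean document; each statement's English description precedes it below -/
import Mathlib

section
/- (Instance-level form of Theorem 1, uniform complementary labels.) Let K ≥ 2 and let q lie in the probability simplex Δ over {1,…,K} with q_k < 1 for all k, and set q̄_k = (1 − q_k)/(K − 1). Then for every p ∈ Δ with p_k < 1 for all k, the complementary risk satisfies L_{q̄}(p) = −Σ_k q̄_k log(1 − p_k) ≥ L_{q̄}(q), with equality if and only if p = q. Hence the true posterior q is the unique minimizer of the complementary risk built only from complementary labels. -/
/-!
Put `a_k = 1 - q_k` and `b_k = 1 - p_k`: both are positive and sum to `K - 1`, and the risk is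
`-(∑ a_k log b_k)/(K - 1)`. The tangent line `log x ≤ x - 1` at `x = b_k / a_k` gives
`a_k log b_k ≤ a_k log a_k + (b_k - a_k)`, strictly unless `b_k = a_k`; summing, the extra terms
cancel, which is Gibbs' inequality for the unnormalised weights `a` and `b`.
-/

open Real Finset

theorem mul_log_le_mul_log_add_sub {a b : ℝ} (ha : 0 < a) (hb : 0 < b) :
    a * log b ≤ a * log a + (b - a) := by
  have h := mul_le_mul_of_nonneg_left (log_le_sub_one_of_pos (div_pos hb ha)) ha.le
  rw [log_div hb.ne' ha.ne', mul_sub, mul_sub, mul_one, mul_div_cancel₀ _ ha.ne'] at h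
  linarith

theorem mul_log_lt_mul_log_add_sub {a b : ℝ} (ha : 0 < a) (hb : 0 < b) (hne : b ≠ a) :
    a * log b < a * log a + (b - a) := by
  have hne_one : b / a ≠ 1 := fun h => hne ((div_eq_one_iff_eq ha.ne').mp h)
  have h := mul_lt_mul_of_pos_left (log_lt_sub_one_of_pos (div_pos hb ha) hne_one) ha
  rw [log_div hb.ne' ha.ne', mul_sub, mul_sub, mul_one, mul_div_cancel₀ _ ha.ne'] at h
  linarith

section Gibbs

variable {ι : Type*} {s : Finset ι} {a b : ι → ℝ}

theorem sum_mul_log_le_sum_mul_log (ha : ∀ i ∈ s, 0 < a i) (hb : ∀ i ∈ s, 0 < b i)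
    (hsum : ∑ i ∈ s, b i ≤ ∑ i ∈ s, a i) :
    ∑ i ∈ s, a i * log (b i) ≤ ∑ i ∈ s, a i * log (a i) :=
  calc ∑ i ∈ s, a i * log (b i)
      ≤ ∑ i ∈ s, (a i * log (a i) + (b i - a i)) :=
        sum_le_sum fun i hi => mul_log_le_mul_log_add_sub (ha i hi) (hb i hi)
    _ = ∑ i ∈ s, a i * log (a i) + (∑ i ∈ s, b i - ∑ i ∈ s, a i) := by
        rw [sum_add_distrib, sum_sub_distrib]
    _ ≤ ∑ i ∈ s, a i * log (a i) := by linarith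

theorem sum_mul_log_lt_sum_mul_log (ha : ∀ i ∈ s, 0 < a i) (hb : ∀ i ∈ s, 0 < b i)
    (hsum : ∑ i ∈ s, b i ≤ ∑ i ∈ s, a i) (hne : ∃ i ∈ s, b i ≠ a i) :
    ∑ i ∈ s, a i * log (b i) < ∑ i ∈ s, a i * log (a i) := by
  obtain ⟨j, hj, hbj⟩ := hne
  calc ∑ i ∈ s, a i * log (b i)
      < ∑ i ∈ s, (a i * log (a i) + (b i - a i)) :=
        sum_lt_sum (fun i hi => mul_log_le_mul_log_add_sub (ha i hi) (hb i hi))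
          ⟨j, hj, mul_log_lt_mul_log_add_sub (ha j hj) (hb j hj) hbj⟩
    _ = ∑ i ∈ s, a i * log (a i) + (∑ i ∈ s, b i - ∑ i ∈ s, a i) := by
        rw [sum_add_distrib, sum_sub_distrib]
    _ ≤ ∑ i ∈ s, a i * log (a i) := by linarith

end Gibbs

theorem complementary_risk_minimized_at_truth_general {K : ℕ} (hK : 2 ≤ K)
    (q : Fin K → ℝ)
    (hq1 : ∑ k, q k = 1) (hqlt : ∀ k, q k < 1) :
    ∀ p : Fin K → ℝ, (∀ k, 0 ≤ p k) → ∑ k, p k = 1 → (∀ k, p k < 1) →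
      (-∑ k, ((1 - q k) / ((K : ℝ) - 1)) * Real.log (1 - p k) ≥
        -∑ k, ((1 - q k) / ((K : ℝ) - 1)) * Real.log (1 - q k)) ∧
      ((-∑ k, ((1 - q k) / ((K : ℝ) - 1)) * Real.log (1 - p k) =
        -∑ k, ((1 - q k) / ((K : ℝ) - 1)) * Real.log (1 - q k)) ↔ p = q) := by
  intro p _ hp1 hplt
  have hK1 : (0 : ℝ) < K - 1 := by
    have : (2 : ℝ) ≤ K := by exact_mod_cast hK
    linarith
  have ha : ∀ k ∈ univ, 0 < 1 - q k := fun k _ => sub_pos.mpr (hqlt k)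
  have hb : ∀ k ∈ univ, 0 < 1 - p k := fun k _ => sub_pos.mpr (hplt k)
  have hsum : ∑ k, (1 - p k) ≤ ∑ k, (1 - q k) := by simp only [sum_sub_distrib, hp1, hq1, le_refl]
  have hrisk : ∀ r : Fin K → ℝ, ∑ k, (1 - q k) / ((K : ℝ) - 1) * log (1 - r k) =
      (∑ k, (1 - q k) * log (1 - r k)) / ((K : ℝ) - 1) := fun r => by
    simp only [sum_div, div_mul_eq_mul_div]
  simp only [hrisk, ge_iff_le, neg_le_neg_iff, neg_inj, div_left_inj' hK1.ne']
  refine ⟨div_le_div_of_nonneg_right (sum_mul_log_le_sum_mul_log ha hb hsum) hK1.le,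
    fun heq => ?_, fun hpq => hpq ▸ rfl⟩
  by_contra hpq
  obtain ⟨k, hk⟩ := Function.ne_iff.mp hpq
  have hne : ∃ k ∈ univ, 1 - p k ≠ 1 - q k := ⟨k, mem_univ k, fun h => hk (sub_right_injective h)⟩
  exact (sum_mul_log_lt_sum_mul_log ha hb hsum hne).ne heq

/-- instance-level Theorem 1, uniform complementary labels: for `q` in the
simplex with `q_k < 1` for all `k` and `q̄_k = (1 - q_k)/(K - 1)`, every prediction `p` in
the simplex with `p_k < 1` for all `k` satisfies
`L_{q̄}(p) = -∑ q̄_k log(1 - p_k) ≥ L_{q̄}(q)`, with equality iff `p = q`. -/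
theorem complementary_risk_minimized_at_truth {K : ℕ} (hK : 2 ≤ K)
    (q : Fin K → ℝ)
    (hq0 : ∀ k, 0 ≤ q k) (hq1 : ∑ k, q k = 1) (hqlt : ∀ k, q k < 1) :
    ∀ p : Fin K → ℝ, (∀ k, 0 ≤ p k) → ∑ k, p k = 1 → (∀ k, p k < 1) →
      (-∑ k, ((1 - q k) / ((K : ℝ) - 1)) * Real.log (1 - p k) ≥
        -∑ k, ((1 - q k) / ((K : ℝ) - 1)) * Real.log (1 - q k)) ∧
      ((-∑ k, ((1 - q k) / ((K : ℝ) - 1)) * Real.log (1 - p k) =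
        -∑ k, ((1 - q k) / ((K : ℝ) - 1)) * Real.log (1 - q k)) ↔ p = q) :=
  complementary_risk_minimized_at_truth_general hK q hq1 hqlt
end

section
/- Let K ≥ 2 and let q lie in the probability simplex Δ over {1,…,K} with q_k < 1 for all k, and set q̄_k = (1 − q_k)/(K − 1). The minimum value of the complementary risk L_{q̄} over Δ, attained at p = q, equals −Σ_{k=1}^K q̄_k log(1 − q_k) = H(q̄) − log(K − 1), where H(q̄) = −Σ_{k=1}^K q̄_k log q̄_k is the Shannon entropy of the complementary distribution. -/
open Real

/- The first claim is Gibbs' inequality for the positive vectors `1 - q` and `1 - p`, which both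
sum to `K - 1`; it rests on `log t ≤ t - 1`. The second is `log (x / c) = log x - log c`
summed against weights `q̄` of total mass one. -/

theorem Real.mul_log_sub_log_le_sub {x y : ℝ} (hx : 0 ≤ x) (hy : 0 < y) :
    x * (log y - log x) ≤ y - x := by
  rcases hx.eq_or_lt with rfl | hx
  · simpa using hy.le
  · calc x * (log y - log x) = x * log (y / x) := by rw [log_div hy.ne' hx.ne']
      _ ≤ x * (y / x - 1) := mul_le_mul_of_nonneg_left (log_le_sub_one_of_pos (by positivity)) hx.le
      _ = y - x := by field_simp

theorem Real.sum_mul_log_le_sum_mul_log {ι : Type*} {s : Finset ι} {x y : ι → ℝ}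
    (hx : ∀ i ∈ s, 0 ≤ x i) (hy : ∀ i ∈ s, 0 < y i) (hxy : ∑ i ∈ s, y i ≤ ∑ i ∈ s, x i) :
    ∑ i ∈ s, x i * log (y i) ≤ ∑ i ∈ s, x i * log (x i) := by
  have hgap : ∑ i ∈ s, x i * (log (y i) - log (x i)) ≤ ∑ i ∈ s, (y i - x i) :=
    Finset.sum_le_sum fun i hi => mul_log_sub_log_le_sub (hx i hi) (hy i hi)
  simp only [mul_sub, Finset.sum_sub_distrib] at hgap
  linarith

theorem Real.sum_div_mul_log_div {ι : Type*} {s : Finset ι} {x : ι → ℝ} {c : ℝ}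
    (hx : ∀ i ∈ s, x i ≠ 0) (hc : c ≠ 0) (hsum : ∑ i ∈ s, x i = c) :
    ∑ i ∈ s, x i / c * log (x i / c) = ∑ i ∈ s, x i / c * log (x i) - log c := by
  have hmass : ∑ i ∈ s, x i / c = 1 := by rw [← Finset.sum_div, hsum, div_self hc]
  calc ∑ i ∈ s, x i / c * log (x i / c) = ∑ i ∈ s, (x i / c * log (x i) - x i / c * log c) :=
        Finset.sum_congr rfl fun i hi => by rw [log_div (hx i hi) hc, mul_sub]
    _ = ∑ i ∈ s, x i / c * log (x i) - log c := by
        rw [Finset.sum_sub_distrib, ← Finset.sum_mul, hmass, one_mul]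

theorem Fintype.sum_one_sub {ι : Type*} [Fintype ι] {q : ι → ℝ} (hq : ∑ i, q i = 1) :
    ∑ i, (1 - q i) = Fintype.card ι - 1 := by
  simp [Finset.sum_sub_distrib, hq]

theorem complementary_risk_min_value_general {K : ℕ} (hK : 2 ≤ K)
    (q : Fin K → ℝ)
    (hq1 : ∑ k, q k = 1) (hqlt : ∀ k, q k < 1) :
    (∀ p : Fin K → ℝ, (∀ k, 0 ≤ p k) → ∑ k, p k = 1 → (∀ k, p k < 1) →
      -∑ k, ((1 - q k) / ((K : ℝ) - 1)) * Real.log (1 - q k) ≤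
        -∑ k, ((1 - q k) / ((K : ℝ) - 1)) * Real.log (1 - p k)) ∧
    -∑ k, ((1 - q k) / ((K : ℝ) - 1)) * Real.log (1 - q k) =
      (-∑ k, ((1 - q k) / ((K : ℝ) - 1)) *
          Real.log ((1 - q k) / ((K : ℝ) - 1)))
        - Real.log ((K : ℝ) - 1) := by
  have hK1 : (0 : ℝ) < K - 1 := by
    have : (2 : ℝ) ≤ K := by exact_mod_cast hK
    linarith
  have hqpos : ∀ k, 0 < 1 - q k := fun k => sub_pos.mpr (hqlt k)
  have hqsum : ∑ k, (1 - q k) = (K : ℝ) - 1 := by simpa using Fintype.sum_one_sub hq1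
  refine ⟨fun p _ hp1 hplt => ?_, ?_⟩
  · have hpsum : ∑ k, (1 - p k) = (K : ℝ) - 1 := by simpa using Fintype.sum_one_sub hp1
    have hgibbs := sum_mul_log_le_sum_mul_log (s := Finset.univ) (fun k _ => (hqpos k).le)
      (fun k _ => sub_pos.mpr (hplt k)) (hpsum.trans hqsum.symm).le
    simp only [div_mul_eq_mul_div, ← Finset.sum_div, neg_le_neg_iff]
    exact div_le_div_of_nonneg_right hgibbs hK1.le
  · rw [sum_div_mul_log_div (fun k _ => (hqpos k).ne') hK1.ne' hqsum]
    ring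

/-- the minimum value of the complementary risk `L_{q̄}` (attained at `p = q`)
equals `-∑ q̄_k log(1 - q_k) = H(q̄) - log(K - 1)`, where `H(q̄) = -∑ q̄_k log q̄_k` is the
Shannon entropy of the complementary distribution. -/
theorem complementary_risk_min_value {K : ℕ} (hK : 2 ≤ K)
    (q : Fin K → ℝ)
    (hq0 : ∀ k, 0 ≤ q k) (hq1 : ∑ k, q k = 1) (hqlt : ∀ k, q k < 1) :
    (∀ p : Fin K → ℝ, (∀ k, 0 ≤ p k) → ∑ k, p k = 1 → (∀ k, p k < 1) →
      -∑ k, ((1 - q k) / ((K : ℝ) - 1)) * Real.log (1 - q k) ≤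
        -∑ k, ((1 - q k) / ((K : ℝ) - 1)) * Real.log (1 - p k)) ∧
    -∑ k, ((1 - q k) / ((K : ℝ) - 1)) * Real.log (1 - q k) =
      (-∑ k, ((1 - q k) / ((K : ℝ) - 1)) *
          Real.log ((1 - q k) / ((K : ℝ) - 1)))
        - Real.log ((K : ℝ) - 1) :=
  complementary_risk_min_value_general hK q hq1 hqlt
end

section
/- (Biased/non-uniform complementary labels.) Let K ≥ 2 and let w lie in the probability simplex Δ over {1,…,K} with 0 < w_k ≤ 1/(K − 1) for all k. Define p* ∈ ℝ^K by p*_k = 1 − (K − 1)·w_k. Then p* ∈ Δ, and for every p ∈ Δ with p_k < 1 for all k one has L_w(p) = −Σ_k w_k log(1 − p_k) ≥ L_w(p*), with equality if and only if p = p*. In particular, if w = q̄ is the complementary distribution of a posterior q with q_k < 1 for all k, the unique minimizer is p* = q. -/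
open Real

/-! The risk is a weighted sum of `log (1 - p k)`, and `log` lies below its tangent lines. Taking the
tangent of `w k * log` at `(K - 1) * w k`, the linear error terms sum to zero because both
`1 - p` and `(K - 1) • w` have total mass `K - 1`; strict concavity gives uniqueness. -/

section TangentBound

variable {w x y : ℝ}

theorem mul_log_le_mul_log_add_tangent (hw : 0 ≤ w) (hx : 0 < x) (hy : 0 < y) :
    w * log x ≤ w * log y + w / y * (x - y) := by
  have h := mul_le_mul_of_nonneg_left (log_le_sub_one_of_pos (div_pos hx hy)) hw
  rw [log_div hx.ne' hy.ne'] at h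
  have : w * (x / y - 1) = w / y * (x - y) := by field_simp
  linarith

theorem mul_log_lt_mul_log_add_tangent (hw : 0 < w) (hx : 0 < x) (hy : 0 < y) (hxy : x ≠ y) :
    w * log x < w * log y + w / y * (x - y) := by
  have hne : x / y ≠ 1 := fun h => hxy ((div_eq_one_iff_eq hy.ne').mp h)
  have h := mul_lt_mul_of_pos_left (log_lt_sub_one_of_pos (div_pos hx hy) hne) hw
  rw [log_div hx.ne' hy.ne'] at h
  have : w * (x / y - 1) = w / y * (x - y) := by field_simp
  linarith

end TangentBound

section WeightedLogSum

variable {ι : Type*} [Fintype ι] {w x : ι → ℝ} {c : ℝ}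

theorem sum_mul_log_add_tangent_eq (hc : 0 < c) (hw : ∀ i, 0 < w i)
    (hsum : ∑ i, x i = c * ∑ i, w i) :
    ∑ i, (w i * log (c * w i) + w i / (c * w i) * (x i - c * w i)) =
      ∑ i, w i * log (c * w i) := by
  have hslope : ∀ i, w i / (c * w i) = c⁻¹ := fun i => by
    field_simp [(hw i).ne']
  simp only [hslope, Finset.sum_add_distrib, ← Finset.mul_sum, Finset.sum_sub_distrib, hsum,
    sub_self, mul_zero, add_zero]

theorem sum_mul_log_le_sum_mul_log_mul (hc : 0 < c) (hw : ∀ i, 0 < w i) (hx : ∀ i, 0 < x i)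
    (hsum : ∑ i, x i = c * ∑ i, w i) :
    ∑ i, w i * log (x i) ≤ ∑ i, w i * log (c * w i) :=
  (Finset.sum_le_sum fun i _ =>
    mul_log_le_mul_log_add_tangent (hw i).le (hx i) (mul_pos hc (hw i))).trans_eq
    (sum_mul_log_add_tangent_eq hc hw hsum)

theorem sum_mul_log_lt_sum_mul_log_mul (hc : 0 < c) (hw : ∀ i, 0 < w i) (hx : ∀ i, 0 < x i)
    (hsum : ∑ i, x i = c * ∑ i, w i) (hne : x ≠ fun i => c * w i) :
    ∑ i, w i * log (x i) < ∑ i, w i * log (c * w i) := by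
  obtain ⟨j, hj⟩ := Function.ne_iff.mp hne
  refine (Finset.sum_lt_sum (fun i _ =>
    mul_log_le_mul_log_add_tangent (hw i).le (hx i) (mul_pos hc (hw i)))
    ⟨j, Finset.mem_univ j, ?_⟩).trans_eq (sum_mul_log_add_tangent_eq hc hw hsum)
  exact mul_log_lt_mul_log_add_tangent (hw j) (hx j) (mul_pos hc (hw j)) hj

end WeightedLogSum

/-- biased/non-uniform complementary labels: for `w` in the simplex with
`0 < w_k ≤ 1/(K-1)` for all `k`, the point `p*_k = 1 - (K-1)·w_k` lies in the simplex and
uniquely minimizes the complementary risk `L_w` over simplex points with all coordinates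
below 1; in particular if `w = q̄` for a posterior `q` with `q_k < 1`, then `p* = q`. -/
theorem biased_complementary_risk_minimizer {K : ℕ} (hK : 2 ≤ K)
    (w : Fin K → ℝ)
    (hw0 : ∀ k, 0 < w k) (hwub : ∀ k, w k ≤ 1 / ((K : ℝ) - 1))
    (hw1 : ∑ k, w k = 1) :
    ((∀ k, 0 ≤ 1 - ((K : ℝ) - 1) * w k) ∧ ∑ k, (1 - ((K : ℝ) - 1) * w k) = 1) ∧
    (∀ p : Fin K → ℝ, (∀ k, 0 ≤ p k) → ∑ k, p k = 1 → (∀ k, p k < 1) →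
      (-∑ k, w k * Real.log (1 - p k) ≥
        -∑ k, w k * Real.log (1 - (1 - ((K : ℝ) - 1) * w k))) ∧
      ((-∑ k, w k * Real.log (1 - p k) =
        -∑ k, w k * Real.log (1 - (1 - ((K : ℝ) - 1) * w k))) ↔
        p = fun k => 1 - ((K : ℝ) - 1) * w k)) ∧
    (∀ q : Fin K → ℝ, (∀ k, q k < 1) →
      (∀ k, w k = (1 - q k) / ((K : ℝ) - 1)) →
      (fun k => 1 - ((K : ℝ) - 1) * w k) = q) := by
  have hc : (0 : ℝ) < K - 1 := by
    have : (2 : ℝ) ≤ K := by exact_mod_cast hK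
    linarith
  refine ⟨⟨fun k => ?_, ?_⟩, fun p _ hp1 hp_lt => ?_, fun q _ hq => funext fun k => ?_⟩
  · have := (le_div_iff₀' hc).mp (hwub k)
    linarith
  · rw [Finset.sum_sub_distrib, ← Finset.mul_sum, hw1]
    simp
  · have hx : ∀ k, 0 < 1 - p k := fun k => sub_pos.mpr (hp_lt k)
    have hsum : ∑ k, (1 - p k) = (K - 1) * ∑ k, w k := by
      simp [Finset.sum_sub_distrib, hp1, hw1]
    simp only [sub_sub_cancel, ge_iff_le, neg_le_neg_iff, neg_inj]
    refine ⟨sum_mul_log_le_sum_mul_log_mul hc hw0 hx hsum, fun heq => ?_, ?_⟩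
    · by_contra hne
      refine (sum_mul_log_lt_sum_mul_log_mul hc hw0 hx hsum fun h => hne ?_).ne heq
      funext k
      linarith [congrFun h k]
    · rintro rfl
      simp only [sub_sub_cancel]
  · rw [hq k]
    field_simp
    ring
end
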